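/- arXiv:1008.4458 — 2 statements merged into one kernel-verified Lean document; each statement's English description precedes it below -/
import Mathlib

section
/- Let b be a regular symmetric or alternate bilinear form on a finite-dimensional vector space V over a field K, and u ∈ GL(V) a b-isometry. If P, Q are monic polynomials with nonzero constant terms such that P^# and Q are coprime, then Ker P(u) and Ker Q(u) are b-orthogonal to each other. -/
/-!
If `u` preserves `b`, then `u⁻¹` is the `b`-adjoint of `u`, so `f(u⁻¹)` is the adjoint of `f(u)`
for every polynomial `f`. Multiplying `P(u)` by `u^{-deg P}` turns it into `P^#(u⁻¹)`, so
`Ker P(u) ⊆ Ker P^#(u⁻¹)`. Now write `1 = a P^# + c Q`: on `Ker Q(u)` the operator `(a P^#)(u)`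
is the identity, and its adjoint `(a P^#)(u⁻¹)` kills `Ker P(u)`.
-/

open Polynomial

/-- The reciprocal polynomial `P^#`. -/
noncomputable def recip {K : Type*} [Field K] (P : K[X]) : K[X] :=
  Polynomial.C (P.coeff 0)⁻¹ * P.reverse

namespace LinearMap

section IsAdjointPair

variable {R M M₂ : Type*} [CommRing R] [AddCommGroup M] [Module R M] [AddCommGroup M₂]
  [Module R M₂] {B : M →ₗ[R] M →ₗ[R] M₂} {f g : Module.End R M}

theorem IsAdjointPair.pow (h : IsAdjointPair B B f g) (n : ℕ) :
    IsAdjointPair B B ⇑(f ^ n) ⇑(g ^ n) := by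
  induction n with
  | zero => exact isAdjointPair_one
  | succ n ih => rw [pow_succ f, pow_succ' g]; exact ih.mul h

theorem IsAdjointPair.aeval (h : IsAdjointPair B B f g) (p : R[X]) :
    IsAdjointPair B B ⇑(aeval f p) ⇑(aeval g p) := by
  induction p using Polynomial.induction_on' with
  | add p q hp hq => rw [map_add, map_add]; exact hp.add hq
  | monomial n c =>
    simpa only [aeval_monomial, ← Algebra.smul_def, coe_smul] using (h.pow n).smul c

theorem IsAdjointPair.apply_eq_zero_of_isCoprime (h : IsAdjointPair B B f g) {p q : R[X]}
    (hpq : IsCoprime p q) {x y : M} (hx : x ∈ ker (Polynomial.aeval f p))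
    (hy : y ∈ ker (Polynomial.aeval g q)) :
    B x y = 0 := by
  obtain ⟨a, c, hac⟩ := hpq
  have hy' : Polynomial.aeval g (a * p) y = y := by
    have := congrArg (fun r => Polynomial.aeval g r y) hac
    simpa [mem_ker.mp hy] using this
  calc B x y = B x (Polynomial.aeval g (a * p) y) := by rw [hy']
    _ = B (Polynomial.aeval f (a * p) x) y := (h.aeval _ x y).symm
    _ = 0 := by simp [mem_ker.mp hx]

end IsAdjointPair

theorem IsOrthogonal.isAdjointPair_symm {R M : Type*} [CommRing R] [AddCommGroup M] [Module R M]
    {B : LinearMap.BilinForm R M} {u : M ≃ₗ[R] M} (h : B.IsOrthogonal u) :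
    IsAdjointPair B B u.symm u := fun x y => by
  simpa using (h (u.symm x) y).symm

end LinearMap

namespace Polynomial

variable {R A : Type*} [CommSemiring R] [Semiring A] [Algebra R A]

theorem aeval_units_inv_reflect {N : ℕ} {p : R[X]} (hp : p.natDegree ≤ N) (u : Aˣ) :
    aeval (↑u⁻¹ : A) (reflect N p) = ↑u⁻¹ ^ N * aeval (u : A) p := by
  refine induction_with_natDegree_le
    (fun p => aeval (↑u⁻¹ : A) (reflect N p) = ↑u⁻¹ ^ N * aeval (u : A) p) N (by simp)
    (fun n r _ hnN => ?_) (fun p q _ _ hp hq => by simp [hp, hq, mul_add]) p hp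
  have hpow : (↑u⁻¹ : A) ^ N * (u : A) ^ n = ↑u⁻¹ ^ (N - n) := by
    simp only [← Units.val_pow_eq_pow_val, ← Units.val_mul, inv_pow_sub u hnN, inv_pow]
  simp only [revAt_le hnN, reflect_C_mul_X_pow, map_mul, aeval_C, map_pow, aeval_X, ← mul_assoc,
    ← Algebra.commutes, mul_assoc _ _ ((u : A) ^ n), hpow]

end Polynomial

theorem ker_orthogonal_ker_general {K V : Type*} [Field K] [AddCommGroup V] [Module K V]
    (B : V →ₗ[K] V →ₗ[K] K)
    (u : V ≃ₗ[K] V)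
    (hiso : ∀ x y, B (u x) (u y) = B x y)
    (P Q : K[X])
    (hcop : IsCoprime (recip P) Q) :
    ∀ x ∈ LinearMap.ker (Polynomial.aeval (u : Module.End K V) P),
      ∀ y ∈ LinearMap.ker (Polynomial.aeval (u : Module.End K V) Q),
        B x y = 0 := by
  intro x hx y hy
  have hrev : aeval (u.symm : Module.End K V) P.reverse =
      (u.symm : Module.End K V) ^ P.natDegree * aeval (u : Module.End K V) P :=
    aeval_units_inv_reflect le_rfl (LinearMap.GeneralLinearGroup.ofLinearEquiv u)
  have hx' : x ∈ LinearMap.ker (aeval (u.symm : Module.End K V) (recip P)) := by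
    simp [recip, hrev, LinearMap.mem_ker.mp hx]
  exact (LinearMap.IsOrthogonal.isAdjointPair_symm hiso).apply_eq_zero_of_isCoprime hcop hx' hy

theorem ker_orthogonal_ker {K V : Type*} [Field K] [AddCommGroup V] [Module K V]
    [FiniteDimensional K V]
    (B : V →ₗ[K] V →ₗ[K] K)
    (hreg : B.Nondegenerate)
    (hsa : (∀ x y, B x y = B y x) ∨ (∀ x, B x x = 0))
    (u : V ≃ₗ[K] V)
    (hiso : ∀ x y, B (u x) (u y) = B x y)
    (P Q : K[X]) (hPm : P.Monic) (hQm : Q.Monic)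
    (hP0 : P.coeff 0 ≠ 0) (hQ0 : Q.coeff 0 ≠ 0)
    (hcop : IsCoprime (recip P) Q) :
    ∀ x ∈ LinearMap.ker (Polynomial.aeval (u : Module.End K V) P),
      ∀ y ∈ LinearMap.ker (Polynomial.aeval (u : Module.End K V) Q),
        B x y = 0 :=
  ker_orthogonal_ker_general B u hiso P Q hcop
end

section
/- Let K be a field of characteristic 2, b a regular symmetric bilinear form on a finite-dimensional K-vector space V, and u ∈ GL(V) a b-isometry with u − id nilpotent. Then for every positive integer k, the rank of (u − id)^{2k} is even. -/
/-!
Write `N = u - 1`. As `u` is a `B`-isometry, the adjoint of `N` is `u⁻¹ - 1 = -u⁻¹ N`, which is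
`u⁻¹ N` in characteristic 2. Hence the form `C x y = B (N ^ (2k) u⁻ᵏ x) y` satisfies
`C x x = B X X` with `X = N ^ k u⁻ᵏ x`, and `X` lies in the range of `N` because `k > 0`. Since
`B (N y) (N y) = 2 B y y - 2 B (u y) y = 0`, the form `C` is alternating, so its rank is even:
a maximal isotropic subspace `L` of `C` contains the radical and equals its own orthogonal, so
`2 dim L = dim V + dim (rad C)`. Finally `B` is nondegenerate and `u` is invertible, so `C` has
the rank of `N ^ (2k)`.
-/

open Module LinearMap

namespace LinearMap.BilinForm

section CommSemiring

variable {R M : Type*} [CommSemiring R] [AddCommMonoid M] [Module R M]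

theorem orthogonal_sup (B : LinearMap.BilinForm R M) (L L' : Submodule R M) :
    B.orthogonal (L ⊔ L') = B.orthogonal L ⊓ B.orthogonal L' := by
  refine le_antisymm (le_inf (orthogonal_le le_sup_left) (orthogonal_le le_sup_right)) ?_
  rintro v ⟨hvL, hvL'⟩ n hn
  obtain ⟨l, hl, l', hl', rfl⟩ := Submodule.mem_sup.1 hn
  rw [map_add, LinearMap.add_apply, hvL l hl, hvL' l' hl', add_zero]

theorem IsRefl.sup_le_orthogonal_sup {B : LinearMap.BilinForm R M} (hB : B.IsRefl)
    {L L' : Submodule R M} (hL : L ≤ B.orthogonal L) (hL' : L' ≤ B.orthogonal L')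
    (hLL' : L' ≤ B.orthogonal L) :
    L ⊔ L' ≤ B.orthogonal (L ⊔ L') := by
  have hL'L : L ≤ B.orthogonal L' := (le_orthogonal_orthogonal hB).trans (orthogonal_le hLL')
  rw [orthogonal_sup]
  exact sup_le (le_inf hL hL'L) (le_inf hLL' hL')

end CommSemiring

variable {K V : Type*} [Field K] [AddCommGroup V] [Module K V] [FiniteDimensional K V]
  {B : LinearMap.BilinForm K V}

theorem IsAlt.exists_ker_le_orthogonal_eq_self (hB : B.IsAlt) :
    ∃ L : Submodule K V, LinearMap.ker B ≤ L ∧ B.orthogonal L = L := by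
  obtain ⟨L, hL : L ≤ B.orthogonal L, hmax⟩ := set_has_maximal_iff_noetherian.mpr inferInstance
    {L : Submodule K V | L ≤ B.orthogonal L} ⟨⊥, Set.mem_ofPred.2 bot_le⟩
  have hsup (L' : Submodule K V) (hL' : L' ≤ B.orthogonal L') (hLL' : L' ≤ B.orthogonal L) :
      L' ≤ L :=
    le_sup_right.trans_eq
      (le_sup_left.lt_or_eq.resolve_left (hmax _ (hB.isRefl.sup_le_orthogonal_sup hL hL' hLL'))).symm
  have hker_le (L' : Submodule K V) : LinearMap.ker B ≤ B.orthogonal L' :=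
    (orthogonal_top_eq_ker hB.isRefl).symm.le.trans (orthogonal_le le_top)
  refine ⟨L, hsup _ (hker_le _) (hker_le _), le_antisymm (fun v hv ↦ ?_) hL⟩
  have hspan : K ∙ v ≤ B.orthogonal (K ∙ v) := by
    rw [Submodule.span_singleton_le_iff_mem]
    intro n hn
    obtain ⟨a, rfl⟩ := Submodule.mem_span_singleton.1 hn
    rw [map_smul, LinearMap.smul_apply, hB.self_eq_zero, smul_zero]
  exact hsup _ hspan ((Submodule.span_singleton_le_iff_mem _ _).2 hv)
    (Submodule.mem_span_singleton_self v)

theorem IsAlt.even_finrank_range (hB : B.IsAlt) : Even (finrank K (LinearMap.range B)) := by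
  obtain ⟨L, hker, hL⟩ := hB.exists_ker_le_orthogonal_eq_self
  have hdim := finrank_add_finrank_orthogonal' (B := B) L
  rw [hL, inf_eq_right.mpr hker] at hdim
  have hrank := LinearMap.finrank_range_add_finrank_ker B
  exact ⟨finrank K L - finrank K (LinearMap.ker B), by omega⟩

end LinearMap.BilinForm

namespace LinearMap

theorem IsAdjointPair.pow_s10 {R M : Type*} [CommSemiring R] [AddCommMonoid M] [Module R M]
    {B : LinearMap.BilinForm R M} {f g : Module.End R M} (h : IsAdjointPair B B f g) (n : ℕ) :
    IsAdjointPair B B ⇑(f ^ n) ⇑(g ^ n) := by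
  induction n with
  | zero => exact isAdjointPair_one
  | succ n ih => rw [pow_succ f, pow_succ' g]; exact ih.mul h

variable {R M : Type*} [CommRing R] [CharP R 2] [AddCommGroup M] [Module R M]
  {B : LinearMap.BilinForm R M} {u : M ≃ₗ[R] M}

theorem IsOrthogonal.isAdjointPair_sub_one (hu : B.IsOrthogonal u) :
    IsAdjointPair B B ⇑((u : Module.End R M) - 1)
      ⇑((u.symm : Module.End R M) * ((u : Module.End R M) - 1)) := by
  intro x y
  have hsymm_apply : B x (u.symm y) = B (u x) y := by simpa using (hu x (u.symm y)).symm
  simp [hsymm_apply, CharTwo.sub_eq_add, add_comm]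

theorem IsOrthogonal.apply_sub_one_self (hB : B.IsSymm) (hu : B.IsOrthogonal u) (y : M) :
    B (((u : Module.End R M) - 1) y) (((u : Module.End R M) - 1) y) = 0 := by
  have h2 : (2 : R) = 0 := CharTwo.two_eq_zero
  simp only [sub_apply, LinearEquiv.coe_coe, Module.End.one_apply, map_sub, hu y y,
    hB.eq (u y) y]
  linear_combination (B y y - B y (u y)) * h2

theorem IsOrthogonal.isAlt_comp_pow_sub_one_mul_symm_pow (hB : B.IsSymm) (hu : B.IsOrthogonal u)
    {k : ℕ} (hk : 0 < k) :
    (B ∘ₗ (((u : Module.End R M) - 1) ^ (2 * k) * (u.symm : Module.End R M) ^ k)).IsAlt := by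
  set N : Module.End R M := (u : Module.End R M) - 1
  set S : Module.End R M := (u.symm : Module.End R M)
  have hSN : Commute S N := by ext v; simp [S, N]
  obtain ⟨j, rfl⟩ := Nat.exists_eq_add_one_of_ne_zero hk.ne'
  intro v
  change B ((N ^ (2 * (j + 1)) * S ^ (j + 1)) v) v = 0
  calc B ((N ^ (2 * (j + 1)) * S ^ (j + 1)) v) v
      = B ((N ^ (j + 1)) ((N ^ (j + 1) * S ^ (j + 1)) v)) v := by
        rw [two_mul, pow_add, mul_assoc]; rfl
    _ = B ((N ^ (j + 1) * S ^ (j + 1)) v) (((S * N) ^ (j + 1)) v) :=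
        (hu.isAdjointPair_sub_one.pow_s10 (j + 1)) _ _
    _ = B (N ((N ^ j * S ^ (j + 1)) v)) (N ((N ^ j * S ^ (j + 1)) v)) := by
        rw [hSN.mul_pow, (hSN.pow_pow _ _).eq, pow_succ' N, mul_assoc]; rfl
    _ = 0 := hu.apply_sub_one_self hB _

end LinearMap

theorem rank_even_of_symmetric_unipotent_char_two_general {K V : Type*} [Field K] [CharP K 2]
    [AddCommGroup V] [Module K V] [FiniteDimensional K V]
    (B : V →ₗ[K] V →ₗ[K] K)
    (hsymm : ∀ x y, B x y = B y x)
    (hreg : B.Nondegenerate)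
    (u : V ≃ₗ[K] V)
    (hiso : ∀ x y, B (u x) (u y) = B x y) :
    ∀ k : ℕ, 0 < k → Even (Module.finrank K
      (LinearMap.range (((u : V →ₗ[K] V) - LinearMap.id) ^ (2 * k)))) := by
  intro k hk
  set N : Module.End K V := (u : Module.End K V) - 1
  set S : Module.End K V := (u.symm : Module.End K V)
  have hB_inj : Function.Injective B :=
    LinearMap.ker_eq_bot.1 (separatingLeft_iff_ker_eq_bot.1 hreg.1)
  have hS_surj : range (S ^ k) = ⊤ := by
    rw [range_eq_top, Module.End.coe_pow]
    exact u.symm.surjective.iterate k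
  have hrank :
      finrank K (range (B ∘ₗ (N ^ (2 * k) * S ^ k))) = finrank K (range (N ^ (2 * k))) := by
    rw [range_comp, Module.End.mul_eq_comp, range_comp_of_range_eq_top _ hS_surj]
    exact (Submodule.equivMapOfInjective B hB_inj _).finrank_eq.symm
  rw [← Module.End.one_eq_id, ← hrank]
  exact BilinForm.IsAlt.even_finrank_range
    (IsOrthogonal.isAlt_comp_pow_sub_one_mul_symm_pow ⟨hsymm⟩ hiso hk)

theorem rank_even_of_symmetric_unipotent_char_two {K V : Type*} [Field K] [CharP K 2]
    [AddCommGroup V] [Module K V] [FiniteDimensional K V]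
    (B : V →ₗ[K] V →ₗ[K] K)
    (hsymm : ∀ x y, B x y = B y x)
    (hreg : B.Nondegenerate)
    (u : V ≃ₗ[K] V)
    (hiso : ∀ x y, B (u x) (u y) = B x y)
    (hnil : IsNilpotent ((u : V →ₗ[K] V) - LinearMap.id)) :
    ∀ k : ℕ, 0 < k → Even (Module.finrank K
      (LinearMap.range (((u : V →ₗ[K] V) - LinearMap.id) ^ (2 * k)))) :=
  rank_even_of_symmetric_unipotent_char_two_general B hsymm hreg u hiso
end
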